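/- arXiv:math/0501013 — 4 statements merged into one kernel-verified Lean document; each statement's English description precedes it below -/
import Mathlib

section
/- Let A be a complex normed algebra, X a Banach A-bimodule, and T = {λ ∈ ℂ : |λ| = 1}. Suppose f : A → X with f(0) = 0 and φ : A × A → [0,∞) satisfy φ̃(a,b) := (1/2)·Σ_{n=0}^∞ 2^{-n} φ(2ⁿa, 2ⁿb) < ∞ and ‖f(λa+λb) − λf(a) − λf(b)‖ ≤ φ(a,b) for all λ ∈ T, a,b ∈ A, and let d(a) = lim_{n→∞} 2^{-n}f(2ⁿa) be the associated additive map satisfying ‖f(a) − d(a)‖ ≤ φ̃(a,a). If f and the function ψ(a) := φ̃(a,a) are both continuous at a single point a₀ ∈ A, then d is continuous on all of A. -/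
/-!
Since `‖d a‖ ≤ ‖f a‖ + φ̃(a, a)` and the right-hand side is continuous at `a₀`, the additive map
`d` is bounded near `a₀`, hence by translation bounded, say by `M`, near `0`. For fixed `n`,
`n • x` is near `0` whenever `x` is, so `n * ‖d x‖ = ‖d (n • x)‖ ≤ M` near `0`: this is
continuity at `0`, and an additive map continuous at `0` is continuous.
-/

open Filter Topology

namespace AddMonoidHom

variable {G E : Type*} [TopologicalSpace G]

theorem isBoundedUnder_nhds_zero [AddZeroClass G] [ContinuousAdd G] [SeminormedAddGroup E]
    (φ : G →+ E) {a : G}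
    (h : (𝓝 a).IsBoundedUnder (· ≤ ·) (‖φ ·‖)) :
    (𝓝 0).IsBoundedUnder (· ≤ ·) (‖φ ·‖) := by
  obtain ⟨M, hM⟩ := h
  have hshift : Tendsto (· + a) (𝓝 (0 : G)) (𝓝 a) := by
    simpa using (continuous_add_const a).tendsto 0
  refine isBoundedUnder_of_eventually_le (a := M + ‖φ a‖) ?_
  filter_upwards [hshift.eventually hM] with x hx
  calc ‖φ x‖ = ‖φ (x + a) - φ a‖ := by rw [map_add, add_sub_cancel_right]
    _ ≤ ‖φ (x + a)‖ + ‖φ a‖ := norm_sub_le _ _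
    _ ≤ M + ‖φ a‖ := by gcongr

theorem tendsto_nhds_zero_of_isBoundedUnder [AddMonoid G] [ContinuousAdd G]
    [NormedAddCommGroup E] [NormedSpace ℝ E] (φ : G →+ E)
    (h : (𝓝 0).IsBoundedUnder (· ≤ ·) (‖φ ·‖)) :
    Tendsto φ (𝓝 0) (𝓝 0) := by
  obtain ⟨M, hM⟩ := h
  rw [Metric.tendsto_nhds]
  intro ε hε
  obtain ⟨n, hn⟩ := exists_nat_gt (M / ε)
  have hscale : Tendsto (n • · : G → G) (𝓝 0) (𝓝 0) := by
    simpa using (continuous_nsmul n).tendsto (0 : G)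
  filter_upwards [hscale.eventually hM] with x hx
  have hnx : (n : ℝ) * ‖φ x‖ ≤ M := by
    simpa [map_nsmul, RCLike.norm_nsmul ℝ] using hx
  rw [dist_zero_right]
  refine lt_of_mul_lt_mul_left ?_ n.cast_nonneg
  calc (n : ℝ) * ‖φ x‖ ≤ M := hnx
    _ < n * ε := (div_lt_iff₀ hε).mp hn

theorem continuous_of_isBoundedUnder_nhds [AddGroup G] [IsTopologicalAddGroup G]
    [NormedAddCommGroup E] [NormedSpace ℝ E] (φ : G →+ E) {a : G}
    (h : (𝓝 a).IsBoundedUnder (· ≤ ·) (‖φ ·‖)) : Continuous φ :=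
  continuous_of_tendsto_nhds_zero φ <|
    φ.tendsto_nhds_zero_of_isBoundedUnder (φ.isBoundedUnder_nhds_zero h)

end AddMonoidHom

theorem continuity_of_approximating_additive_map_general
    {A : Type*} [NonUnitalNormedRing A]
    {X : Type*} [NormedAddCommGroup X] [NormedSpace ℂ X]
    (f : A → X)
    (φt : A → A → ℝ)
    -- the associated additive map `d`
    (d : A → X)
    (hd_add : ∀ a b : A, d (a + b) = d a + d b)
    (hd_bound : ∀ a : A, ‖f a - d a‖ ≤ φt a a)
    -- continuity of `f` and `ψ(a) = φ̃(a,a)` at a single point `a₀`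
    (a₀ : A) (hf_cont : ContinuousAt f a₀)
    (hψ_cont : ContinuousAt (fun a : A => φt a a) a₀) :
    Continuous d := by
  have hd_le : ∀ a, ‖d a‖ ≤ ‖f a‖ + φt a a := fun a =>
    (norm_le_norm_add_norm_sub (f a) (d a)).trans (by gcongr; exact hd_bound a)
  have hbounded : (𝓝 a₀).IsBoundedUnder (· ≤ ·) (‖d ·‖) :=
    (hf_cont.norm.add hψ_cont).isBoundedUnder_le.mono_le (Eventually.of_forall hd_le)
  exact (AddMonoidHom.mk' d hd_add).continuous_of_isBoundedUnder_nhds hbounded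

/-- Theorem 2.1(ii) of the paper: if the approximately additive map `f` and the
control function `ψ(a) = φ̃(a,a)` are both continuous at a single point `a₀`, then
the associated additive map `d(a) = lim 2⁻ⁿ f(2ⁿ a)` is continuous on all of `A`. -/
theorem continuity_of_approximating_additive_map
    {A : Type*} [NonUnitalNormedRing A] [NormedSpace ℂ A]
    [IsScalarTower ℂ A A] [SMulCommClass ℂ A A]
    {X : Type*} [NormedAddCommGroup X] [NormedSpace ℂ X] [CompleteSpace X]
    (f : A → X) (hf0 : f 0 = 0)
    (φ : A → A → ℝ) (hφ_nonneg : ∀ a b, 0 ≤ φ a b)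
    (hφ_sum : ∀ a b : A,
      Summable fun n : ℕ => ((2 : ℝ) ^ n)⁻¹ * φ ((2 : ℂ) ^ n • a) ((2 : ℂ) ^ n • b))
    (φt : A → A → ℝ)
    (hφt : ∀ a b : A, φt a b =
      (1 / 2) * ∑' n : ℕ, ((2 : ℝ) ^ n)⁻¹ * φ ((2 : ℂ) ^ n • a) ((2 : ℂ) ^ n • b))
    (hf_add : ∀ l : ℂ, ‖l‖ = 1 → ∀ a b : A,
      ‖f (l • a + l • b) - l • f a - l • f b‖ ≤ φ a b)
    -- the associated additive map `d`
    (d : A → X)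
    (hd_lim : ∀ a : A, Tendsto (fun n : ℕ => ((2 : ℂ) ^ n)⁻¹ • f ((2 : ℂ) ^ n • a))
      atTop (𝓝 (d a)))
    (hd_add : ∀ a b : A, d (a + b) = d a + d b)
    (hd_bound : ∀ a : A, ‖f a - d a‖ ≤ φt a a)
    -- continuity of `f` and `ψ(a) = φ̃(a,a)` at a single point `a₀`
    (a₀ : A) (hf_cont : ContinuousAt f a₀)
    (hψ_cont : ContinuousAt (fun a : A => φt a a) a₀) :
    Continuous d :=
  continuity_of_approximating_additive_map_general f φt d hd_add hd_bound a₀ hf_cont hψ_cont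
end

section
/- Let A be a complex Banach algebra and let σ, τ be bounded algebra endomorphisms of A. If A is (σ-τ)-contractible, then A is approximately (σ-τ)-contractible: for every Banach A-bimodule X and every approximate (σ-τ)-derivation f : A → X there exist β > 0 and x ∈ X such that ‖xσ(a) − τ(a)x − f(a)‖ ≤ β for all a ∈ A. -/
/-! Hyers' direct method: approximate additivity makes `2⁻ⁿ f (2ⁿ a)` Cauchy, and its limit `D`
is an additive map within `α` of `f`. Scaling the other defects of `f` by `2⁻ⁿ` shows that `D`
commutes with unimodular scalars and is an exact `(σ-τ)`-derivation. Continuity of `f` at one point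
bounds `D` near `0`, so `D` is continuous, hence real-linear and, by polar decomposition,
complex-linear. Contractibility makes `D` inner, `D a = x σ(a) - τ(a) x`, and this `x` works with
`β = α`. -/

open Filter Topology

/-- A Banach bimodule over a complex Banach algebra `A`:
a complex Banach space `X` with continuous bilinear left and right actions of `A`
which are associative and commute with each other (`a (x b) = (a x) b`). -/
structure BanachBimodule (A : Type*) [NonUnitalNormedRing A] [NormedSpace ℂ A]
    (X : Type*) [NormedAddCommGroup X] [NormedSpace ℂ X] [CompleteSpace X] where
  lsmul : A →L[ℂ] X →L[ℂ] X
  rsmul : A →L[ℂ] X →L[ℂ] X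
  lsmul_mul : ∀ (a b : A) (x : X), lsmul (a * b) x = lsmul a (lsmul b x)
  rsmul_mul : ∀ (a b : A) (x : X), rsmul (a * b) x = rsmul b (rsmul a x)
  middle : ∀ (a b : A) (x : X), lsmul a (rsmul b x) = rsmul b (lsmul a x)

/-- `f : A → X` is an approximate `(σ-τ)`-derivation: `f 0 = 0`, `f` is continuous at
some point, and for some `α > 0` it is approximately `T`-additive and approximately
satisfies the `(σ-τ)`-derivation identity, within `α`. -/
def IsApproxSigmaTauDerivation {A : Type*} [NonUnitalNormedRing A] [NormedSpace ℂ A]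
    {X : Type*} [NormedAddCommGroup X] [NormedSpace ℂ X] [CompleteSpace X]
    (M : BanachBimodule A X) (σ τ : A →L[ℂ] A) (f : A → X) : Prop :=
  f 0 = 0 ∧ (∃ a₀ : A, ContinuousAt f a₀) ∧
    ∃ α : ℝ, 0 < α ∧
      (∀ l : ℂ, ‖l‖ = 1 → ∀ a b : A,
        ‖f (l • a + l • b) - l • f a - l • f b‖ ≤ α) ∧
      (∀ a b : A, ‖f (a * b) - M.rsmul (σ b) (f a) - M.lsmul (τ a) (f b)‖ ≤ α)

lemma eq_of_tendsto_of_norm_sub_le_div_two_pow {F : Type*} [NormedAddCommGroup F]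
    {u v : ℕ → F} {x y : F} {C : ℝ} (hu : Tendsto u atTop (𝓝 x)) (hv : Tendsto v atTop (𝓝 y))
    (h : ∀ n, ‖u n - v n‖ ≤ C / 2 ^ n) : x = y := by
  have hC : Tendsto (fun n : ℕ => C / 2 ^ n) atTop (𝓝 0) :=
    tendsto_const_nhds.div_atTop (tendsto_pow_atTop_atTop_of_one_lt one_lt_two)
  exact sub_eq_zero.mp (tendsto_nhds_unique (hu.sub hv) (squeeze_zero_norm h hC))

section Hyers

variable {E F : Type*} [AddCommGroup E] [NormedAddCommGroup F] [NormedSpace ℝ F]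

noncomputable def hyersApprox (f : E → F) (n : ℕ) (x : E) : F := (2 ^ n : ℝ)⁻¹ • f (2 ^ n • x)

lemma norm_two_pow_inv_smul (n : ℕ) (v : F) : ‖(2 ^ n : ℝ)⁻¹ • v‖ = ‖v‖ / 2 ^ n := by
  rw [norm_smul, norm_inv, norm_pow, Real.norm_two, inv_mul_eq_div]

lemma two_pow_succ_nsmul (n : ℕ) (x : E) : 2 ^ (n + 1) • x = 2 ^ n • x + 2 ^ n • x := by
  rw [pow_succ, mul_nsmul, two_nsmul]

variable {f : E → F} {α : ℝ}

lemma dist_hyersApprox_succ_le (hf : ∀ x y, ‖f (x + y) - f x - f y‖ ≤ α) (x : E) (n : ℕ) :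
    dist (hyersApprox f n x) (hyersApprox f (n + 1) x) ≤ α / 2 / 2 ^ n := by
  set y := 2 ^ n • x
  have h : hyersApprox f n x - hyersApprox f (n + 1) x
      = (2 ^ (n + 1) : ℝ)⁻¹ • -(f (y + y) - f y - f y) := by
    rw [hyersApprox, hyersApprox, two_pow_succ_nsmul]
    match_scalars <;> field_simp; ring
  rw [dist_eq_norm, h, norm_two_pow_inv_smul, norm_neg, pow_succ, div_div, mul_comm (2 ^ n : ℝ)]
  gcongr
  exact hf y y

noncomputable def hyersLimit (f : E → F) (x : E) : F := limUnder atTop (hyersApprox f · x)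

variable [CompleteSpace F]

lemma tendsto_hyersApprox (hf : ∀ x y, ‖f (x + y) - f x - f y‖ ≤ α) (x : E) :
    Tendsto (hyersApprox f · x) atTop (𝓝 (hyersLimit f x)) :=
  (cauchySeq_of_le_geometric_two (dist_hyersApprox_succ_le hf x)).tendsto_limUnder

lemma norm_sub_hyersLimit_le (hf : ∀ x y, ‖f (x + y) - f x - f y‖ ≤ α) (x : E) :
    ‖f x - hyersLimit f x‖ ≤ α := by
  simpa [hyersApprox, dist_eq_norm] using
    dist_le_of_le_geometric_two_of_tendsto₀ (dist_hyersApprox_succ_le hf x) (tendsto_hyersApprox hf x)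

lemma hyersLimit_add (hf : ∀ x y, ‖f (x + y) - f x - f y‖ ≤ α) (x y : E) :
    hyersLimit f (x + y) = hyersLimit f x + hyersLimit f y := by
  refine eq_of_tendsto_of_norm_sub_le_div_two_pow (C := α) (tendsto_hyersApprox hf (x + y))
    ((tendsto_hyersApprox hf x).add (tendsto_hyersApprox hf y)) fun n => ?_
  have h : hyersApprox f n (x + y) - (hyersApprox f n x + hyersApprox f n y)
      = (2 ^ n : ℝ)⁻¹ • (f (2 ^ n • x + 2 ^ n • y) - f (2 ^ n • x) - f (2 ^ n • y)) := by
    rw [hyersApprox, hyersApprox, hyersApprox, nsmul_add]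
    module
  rw [h, norm_two_pow_inv_smul]
  gcongr
  exact hf _ _

noncomputable def hyersLimitAddHom (hf : ∀ x y, ‖f (x + y) - f x - f y‖ ≤ α) : E →+ F :=
  AddMonoidHom.mk' (hyersLimit f) (hyersLimit_add hf)

end Hyers

lemma AddMonoidHom.continuous_of_norm_le_of_norm_lt {E F : Type*} [SeminormedAddCommGroup E]
    [NormedAddCommGroup F] [NormedSpace ℝ F] (D : E →+ F) {δ K : ℝ} (hδ : 0 < δ)
    (hD : ∀ x, ‖x‖ < δ → ‖D x‖ ≤ K) : Continuous D := by
  refine continuous_of_continuousAt_zero D ?_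
  rw [ContinuousAt, map_zero, Metric.tendsto_nhds_nhds]
  intro ε hε
  obtain ⟨n, hn⟩ := pow_unbounded_of_one_lt (K / ε) one_lt_two
  refine ⟨δ / 2 ^ n, by positivity, fun x hx => ?_⟩
  rw [dist_zero_right] at hx ⊢
  have hscaled : ‖2 ^ n • x‖ < δ := calc
    ‖2 ^ n • x‖ ≤ 2 ^ n * ‖x‖ := by simpa using norm_nsmul_le (a := x) (n := 2 ^ n)
    _ < δ := by rwa [lt_div_iff₀' (by positivity)] at hx
  have hbound : 2 ^ n * ‖D x‖ ≤ K := by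
    simpa [map_nsmul, ← Nat.cast_smul_eq_nsmul ℝ, norm_smul] using hD _ hscaled
  rw [div_lt_iff₀ hε] at hn
  exact lt_of_mul_lt_mul_left (hbound.trans_lt hn) (by positivity)

lemma AddMonoidHom.continuous_of_norm_sub_le {E F : Type*} [SeminormedAddCommGroup E]
    [NormedAddCommGroup F] [NormedSpace ℝ F] (D : E →+ F) {f : E → F} {a₀ : E} {α : ℝ}
    (hf : ContinuousAt f a₀) (hfD : ∀ x, ‖f x - D x‖ ≤ α) : Continuous D := by
  obtain ⟨δ, hδ, hball⟩ := Metric.continuousAt_iff.mp hf 1 one_pos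
  refine D.continuous_of_norm_le_of_norm_lt (K := 2 * α + 1) hδ fun h hh => ?_
  have hsplit : D h = -(f (a₀ + h) - D (a₀ + h)) + (f (a₀ + h) - f a₀) + (f a₀ - D a₀) := by
    rw [map_add]; abel
  have hclose : ‖f (a₀ + h) - f a₀‖ < 1 := by
    simpa [dist_eq_norm] using hball (x := a₀ + h) (by simpa [dist_eq_norm] using hh)
  calc ‖D h‖ ≤ ‖f (a₀ + h) - D (a₀ + h)‖ + ‖f (a₀ + h) - f a₀‖ + ‖f a₀ - D a₀‖ := by
        rw [hsplit]; exact (norm_add₃_le).trans (by rw [norm_neg])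
    _ ≤ 2 * α + 1 := by linarith [hfD (a₀ + h), hfD a₀]

lemma AddMonoidHom.map_complex_smul {E F : Type*} [NormedAddCommGroup E] [NormedSpace ℂ E]
    [NormedAddCommGroup F] [NormedSpace ℂ F] (D : E →+ F) (hD : Continuous D)
    (hunit : ∀ l : ℂ, ‖l‖ = 1 → ∀ x, D (l • x) = l • D x) (z : ℂ) (x : E) :
    D (z • x) = z • D x := by
  rw [← Complex.norm_mul_exp_arg_mul_I z, mul_smul, mul_smul, Complex.coe_smul, Complex.coe_smul,
    map_real_smul D hD, hunit _ (Complex.norm_exp_ofReal_mul_I _)]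

section Complex

variable {E F : Type*} [NormedAddCommGroup E] [NormedSpace ℂ E] [NormedAddCommGroup F]
  [NormedSpace ℂ F] [CompleteSpace F] {f : E → F} {α : ℝ}

lemma hyersLimit_smul_of_norm_eq_one
    (hf : ∀ l : ℂ, ‖l‖ = 1 → ∀ x y, ‖f (l • x + l • y) - l • f x - l • f y‖ ≤ α)
    {l : ℂ} (hl : ‖l‖ = 1) (x : E) : hyersLimit f (l • x) = l • hyersLimit f x := by
  have hadd : ∀ x y, ‖f (x + y) - f x - f y‖ ≤ α := by simpa using hf 1 norm_one
  refine eq_of_tendsto_of_norm_sub_le_div_two_pow (C := α / 2)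
    ((tendsto_hyersApprox hadd (l • x)).comp (tendsto_add_atTop_nat 1))
    ((tendsto_hyersApprox hadd x).const_smul l) fun n => ?_
  set y := 2 ^ n • x
  have h : hyersApprox f (n + 1) (l • x) - l • hyersApprox f n x
      = (2 ^ (n + 1) : ℝ)⁻¹ • (f (l • y + l • y) - l • f y - l • f y) := by
    rw [hyersApprox, hyersApprox, smul_comm, two_pow_succ_nsmul, smul_add,
      smul_comm l ((2 ^ n : ℝ)⁻¹)]
    match_scalars <;> field_simp; ring
  rw [Function.comp_apply, h, norm_two_pow_inv_smul, pow_succ, div_div, mul_comm (2 ^ n : ℝ)]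
  gcongr
  exact hf l hl y y

noncomputable def hyersLimitCLM
    (hf : ∀ l : ℂ, ‖l‖ = 1 → ∀ x y, ‖f (l • x + l • y) - l • f x - l • f y‖ ≤ α)
    {a₀ : E} (hcont : ContinuousAt f a₀) : E →L[ℂ] F :=
  have hadd : ∀ x y, ‖f (x + y) - f x - f y‖ ≤ α := by simpa using hf 1 norm_one
  have hD : Continuous (hyersLimitAddHom hadd) :=
    AddMonoidHom.continuous_of_norm_sub_le _ hcont (norm_sub_hyersLimit_le hadd)
  { hyersLimitAddHom hadd with
    map_smul' := (hyersLimitAddHom hadd).map_complex_smul hD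
      fun _ hl => hyersLimit_smul_of_norm_eq_one hf hl
    cont := hD }

end Complex

lemma hyersLimit_mul {A X : Type*} [NonUnitalNormedRing A] [NormedSpace ℂ A] [NormedAddCommGroup X]
    [NormedSpace ℂ X] [CompleteSpace X] (M : BanachBimodule A X) (σ τ : A →L[ℂ] A) {f : A → X}
    {α : ℝ} (hadd : ∀ a b, ‖f (a + b) - f a - f b‖ ≤ α)
    (hmul : ∀ a b, ‖f (a * b) - M.rsmul (σ b) (f a) - M.lsmul (τ a) (f b)‖ ≤ α) (a b : A) :
    hyersLimit f (a * b) = M.rsmul (σ b) (hyersLimit f a) + M.lsmul (τ a) (hyersLimit f b) := by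
  have hα : 0 ≤ α := (norm_nonneg _).trans (hmul 0 0)
  -- `2ⁿa · 2ⁿb = 4ⁿ ab`, so the product is compared along the subsequence `2n`.
  refine eq_of_tendsto_of_norm_sub_le_div_two_pow (C := α)
    ((tendsto_hyersApprox hadd (a * b)).comp (strictMono_mul_left_of_pos two_pos).tendsto_atTop)
    ((((M.rsmul (σ b)).continuous.tendsto _).comp (tendsto_hyersApprox hadd a)).add
      (((M.lsmul (τ a)).continuous.tendsto _).comp (tendsto_hyersApprox hadd b))) fun n => ?_
  set a' := 2 ^ n • a
  set b' := 2 ^ n • b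
  have hprod : a' * b' = 2 ^ (2 * n) • (a * b) := by
    rw [smul_mul_smul_comm, ← pow_add, two_mul]
  have hr : M.rsmul (σ b') = 2 ^ n • M.rsmul (σ b) := by rw [map_nsmul, map_nsmul]
  have hl : M.lsmul (τ a') = 2 ^ n • M.lsmul (τ a) := by rw [map_nsmul, map_nsmul]
  have h : hyersApprox f (2 * n) (a * b)
        - (M.rsmul (σ b) (hyersApprox f n a) + M.lsmul (τ a) (hyersApprox f n b))
      = (2 ^ (2 * n) : ℝ)⁻¹ • (f (a' * b') - M.rsmul (σ b') (f a') - M.lsmul (τ a') (f b')) := by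
    rw [hprod, hr, hl, smul_apply, smul_apply, hyersApprox, hyersApprox, hyersApprox,
      ContinuousLinearMap.map_smul_of_tower, ContinuousLinearMap.map_smul_of_tower]
    match_scalars <;> field_simp <;> ring
  simp only [Function.comp_apply]
  rw [h, norm_two_pow_inv_smul]
  calc _ ≤ α / 2 ^ (2 * n) := by gcongr; exact hmul a' b'
    _ ≤ α / 2 ^ n := by gcongr; exacts [one_le_two, by omega]

theorem approx_contractible_of_contractible_general
    {A : Type*} [NonUnitalNormedRing A] [NormedSpace ℂ A]
    (σ τ : A →L[ℂ] A)
    (hcontr : ∀ (X : Type) [NormedAddCommGroup X] [NormedSpace ℂ X] [CompleteSpace X]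
      (M : BanachBimodule A X) (d : A →L[ℂ] X),
      (∀ a b : A, d (a * b) = M.rsmul (σ b) (d a) + M.lsmul (τ a) (d b)) →
      ∃ x : X, ∀ a : A, d a = M.rsmul (σ a) x - M.lsmul (τ a) x) :
    ∀ (X : Type) [NormedAddCommGroup X] [NormedSpace ℂ X] [CompleteSpace X]
      (M : BanachBimodule A X) (f : A → X),
      IsApproxSigmaTauDerivation M σ τ f →
      ∃ β : ℝ, 0 < β ∧ ∃ x : X, ∀ a : A,
        ‖M.rsmul (σ a) x - M.lsmul (τ a) x - f a‖ ≤ β := by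
  rintro X _ _ _ M f ⟨-, ⟨a₀, hcont⟩, α, hα, hunit, hmul⟩
  have hadd : ∀ a b, ‖f (a + b) - f a - f b‖ ≤ α := by simpa using hunit 1 norm_one
  obtain ⟨x, hx⟩ := hcontr X M (hyersLimitCLM hunit hcont) (hyersLimit_mul M σ τ hadd hmul)
  refine ⟨α, hα, x, fun a => ?_⟩
  rw [← hx a, norm_sub_rev]
  exact norm_sub_hyersLimit_le hadd a

/-- Half of Theorem 3.1 of the paper: if the complex Banach algebra `A` is
`(σ-τ)`-contractible (every bounded `(σ-τ)`-derivation into any Banach `A`-bimodule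
is `(σ-τ)`-inner), then `A` is approximately `(σ-τ)`-contractible. -/
theorem approx_contractible_of_contractible
    {A : Type*} [NonUnitalNormedRing A] [NormedSpace ℂ A]
    [IsScalarTower ℂ A A] [SMulCommClass ℂ A A] [CompleteSpace A]
    (σ τ : A →L[ℂ] A)
    (hσ : ∀ a b : A, σ (a * b) = σ a * σ b) (hτ : ∀ a b : A, τ (a * b) = τ a * τ b)
    (hcontr : ∀ (X : Type) [NormedAddCommGroup X] [NormedSpace ℂ X] [CompleteSpace X]
      (M : BanachBimodule A X) (d : A →L[ℂ] X),
      (∀ a b : A, d (a * b) = M.rsmul (σ b) (d a) + M.lsmul (τ a) (d b)) →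
      ∃ x : X, ∀ a : A, d a = M.rsmul (σ a) x - M.lsmul (τ a) x) :
    ∀ (X : Type) [NormedAddCommGroup X] [NormedSpace ℂ X] [CompleteSpace X]
      (M : BanachBimodule A X) (f : A → X),
      IsApproxSigmaTauDerivation M σ τ f →
      ∃ β : ℝ, 0 < β ∧ ∃ x : X, ∀ a : A,
        ‖M.rsmul (σ a) x - M.lsmul (τ a) x - f a‖ ≤ β :=
  approx_contractible_of_contractible_general σ τ hcontr
end

section
/- Let A be a complex normed algebra, X a complex Banach space, f : A → X a map with f(0) = 0, and φ : A × A → [0,∞) a function such that φ̃(a,b) := (1/2)·Σ_{n=0}^∞ 2^{-n} φ(2ⁿa, 2ⁿb) < ∞ for all a,b ∈ A and ‖f(a+b) − f(a) − f(b)‖ ≤ φ(a,b) for all a,b ∈ A. Then for every a ∈ A the sequence (2^{-n} f(2ⁿ a))_{n≥0} is Cauchy, hence converges to a limit d(a); the map d : A → X is additive (d(a+b) = d(a) + d(b)); ‖f(a) − d(a)‖ ≤ φ̃(a,a) for all a ∈ A; and d is the unique additive map satisfying this bound. -/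
/-!
Hyers' direct method. Writing `x = 2ⁿa`, consecutive terms of `2⁻ⁿ f(2ⁿa)` differ by
`2⁻ⁿ⁻¹ (f(x + x) - 2 f(x))`, of norm at most `2⁻ⁿ⁻¹ φ(x, x)`; these bounds are summable, so the
sequence is Cauchy and its limit `d(a)` lies within `φ̃(a, a)` of `f(a)`. Rescaling the defect
`f(a + b) - f(a) - f(b)` by `2⁻ⁿ` makes it vanish in the limit, so `d` is additive. An additive
`d'` is fixed by the rescaling `a ↦ 2⁻ⁿ d'(2ⁿa)`, while `2⁻ⁿ φ̃(2ⁿa, 2ⁿa)` is a tail of the series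
defining `φ̃(a, a)`; hence `2⁻ⁿ f(2ⁿa) → d'(a)` as soon as `‖f - d'‖ ≤ φ̃`.
-/

open Filter Topology

namespace HyersUlam

variable (𝕜 : Type*) {A X : Type*} [RCLike 𝕜] [AddCommGroup A] [Module 𝕜 A]
  [NormedAddCommGroup X] [NormedSpace 𝕜 X]

def hyersSeq (f : A → X) (a : A) (n : ℕ) : X :=
  ((2 : 𝕜) ^ n)⁻¹ • f ((2 : 𝕜) ^ n • a)

noncomputable def gavrutaTerm (φ : A → A → ℝ) (a b : A) (n : ℕ) : ℝ :=
  ((2 : ℝ) ^ n)⁻¹ * φ ((2 : 𝕜) ^ n • a) ((2 : 𝕜) ^ n • b)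

noncomputable def gavrutaControl (φ : A → A → ℝ) (a b : A) : ℝ :=
  1 / 2 * ∑' n, gavrutaTerm 𝕜 φ a b n

variable {𝕜}

lemma norm_two_pow_inv_smul (n : ℕ) (x : X) :
    ‖((2 : 𝕜) ^ n)⁻¹ • x‖ = ((2 : ℝ) ^ n)⁻¹ * ‖x‖ := by
  rw [norm_smul, norm_inv, norm_pow, RCLike.norm_two]

lemma two_pow_smul_add_self (n : ℕ) (a : A) :
    (2 : 𝕜) ^ (n + 1) • a = (2 : 𝕜) ^ n • a + (2 : 𝕜) ^ n • a := by
  rw [pow_succ, mul_smul, two_smul, smul_add]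

lemma hyersSeq_sub (f g : A → X) (a : A) (n : ℕ) :
    hyersSeq 𝕜 (f - g) a n = hyersSeq 𝕜 f a n - hyersSeq 𝕜 g a n :=
  smul_sub _ _ _

lemma hyersSeq_zero (f : A → X) (a : A) : hyersSeq 𝕜 f a 0 = f a := by
  simp [hyersSeq]

lemma hyersSeq_of_map_add {d : A → X} (hd : ∀ a b, d (a + b) = d a + d b) (a : A) (n : ℕ) :
    hyersSeq 𝕜 d a n = d a := by
  have hscale : d ((2 : 𝕜) ^ n • a) = (2 : 𝕜) ^ n • d a := by
    induction n with
    | zero => simp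
    | succ n ih => rw [two_pow_smul_add_self, hd, ih, ← two_smul 𝕜, smul_smul, ← pow_succ']
  rw [hyersSeq, hscale, inv_smul_smul₀ (pow_ne_zero _ two_ne_zero)]

variable {f : A → X} {φ : A → A → ℝ}

lemma norm_hyersSeq_add_sub_le (hf : ∀ a b, ‖f (a + b) - f a - f b‖ ≤ φ a b) (a b : A) (n : ℕ) :
    ‖hyersSeq 𝕜 f (a + b) n - hyersSeq 𝕜 f a n - hyersSeq 𝕜 f b n‖ ≤ gavrutaTerm 𝕜 φ a b n := by
  simp only [hyersSeq, gavrutaTerm, smul_add, ← smul_sub]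
  rw [norm_two_pow_inv_smul]
  gcongr
  exact hf _ _

lemma dist_hyersSeq_succ_le (hf : ∀ a b, ‖f (a + b) - f a - f b‖ ≤ φ a b) (a : A) (n : ℕ) :
    dist (hyersSeq 𝕜 f a n) (hyersSeq 𝕜 f a (n + 1)) ≤ 1 / 2 * gavrutaTerm 𝕜 φ a a n := by
  rw [dist_eq_norm, hyersSeq, hyersSeq, two_pow_smul_add_self]
  set x := (2 : 𝕜) ^ n • a
  have hdiff : ((2 : 𝕜) ^ n)⁻¹ • f x - ((2 : 𝕜) ^ (n + 1))⁻¹ • f (x + x)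
      = -(((2 : 𝕜) ^ (n + 1))⁻¹ • (f (x + x) - f x - f x)) := by
    match_scalars <;> ring
  rw [hdiff, norm_neg, norm_two_pow_inv_smul, gavrutaTerm, pow_succ]
  calc ((2 : ℝ) ^ n * 2)⁻¹ * ‖f (x + x) - f x - f x‖ ≤ ((2 : ℝ) ^ n * 2)⁻¹ * φ x x := by
        gcongr; exact hf x x
    _ = _ := by ring

lemma cauchySeq_hyersSeq (hf : ∀ a b, ‖f (a + b) - f a - f b‖ ≤ φ a b) {a : A}
    (hφ : Summable (gavrutaTerm 𝕜 φ a a)) : CauchySeq (hyersSeq 𝕜 f a) :=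
  cauchySeq_of_dist_le_of_summable _ (dist_hyersSeq_succ_le hf a) (hφ.mul_left _)

lemma norm_sub_le_gavrutaControl_of_tendsto (hf : ∀ a b, ‖f (a + b) - f a - f b‖ ≤ φ a b)
    {a : A} (hφ : Summable (gavrutaTerm 𝕜 φ a a)) {d : X}
    (hd : Tendsto (hyersSeq 𝕜 f a) atTop (𝓝 d)) : ‖f a - d‖ ≤ gavrutaControl 𝕜 φ a a := by
  have h := dist_le_tsum_of_dist_le_of_tendsto₀ _ (dist_hyersSeq_succ_le hf a)
    (hφ.mul_left _) hd
  rwa [hyersSeq_zero, dist_eq_norm, tsum_mul_left] at h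

lemma map_add_of_tendsto_hyersSeq (hf : ∀ a b, ‖f (a + b) - f a - f b‖ ≤ φ a b)
    {a b : A} (hφ : Summable (gavrutaTerm 𝕜 φ a b)) {d : A → X}
    (hd : ∀ a, Tendsto (hyersSeq 𝕜 f a) atTop (𝓝 (d a))) :
    d (a + b) = d a + d b := by
  have hlim := ((hd (a + b)).sub (hd a)).sub (hd b)
  have hzero : Tendsto (fun n ↦ hyersSeq 𝕜 f (a + b) n - hyersSeq 𝕜 f a n - hyersSeq 𝕜 f b n)
      atTop (𝓝 0) :=
    squeeze_zero_norm (norm_hyersSeq_add_sub_le hf a b) hφ.tendsto_atTop_zero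
  rw [← sub_eq_zero, ← sub_sub]
  exact tendsto_nhds_unique hlim hzero

lemma two_pow_inv_mul_gavrutaTerm (φ : A → A → ℝ) (a b : A) (n m : ℕ) :
    ((2 : ℝ) ^ n)⁻¹ * gavrutaTerm 𝕜 φ ((2 : 𝕜) ^ n • a) ((2 : 𝕜) ^ n • b) m
      = gavrutaTerm 𝕜 φ a b (m + n) := by
  rw [gavrutaTerm, gavrutaTerm, smul_smul, smul_smul, ← pow_add]
  ring

lemma tendsto_two_pow_inv_mul_gavrutaControl (φ : A → A → ℝ) (a b : A) :
    Tendsto (fun n : ℕ ↦ ((2 : ℝ) ^ n)⁻¹ * gavrutaControl 𝕜 φ ((2 : 𝕜) ^ n • a) ((2 : 𝕜) ^ n • b))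
      atTop (𝓝 0) := by
  have htail : ∀ n : ℕ, ((2 : ℝ) ^ n)⁻¹ * gavrutaControl 𝕜 φ ((2 : 𝕜) ^ n • a) ((2 : 𝕜) ^ n • b)
      = 1 / 2 * ∑' m, gavrutaTerm 𝕜 φ a b (m + n) := fun n ↦ by
    simp only [gavrutaControl, mul_left_comm _ (1 / 2 : ℝ), ← tsum_mul_left,
      two_pow_inv_mul_gavrutaTerm]
  simpa only [htail, mul_zero] using (tendsto_sum_nat_add (gavrutaTerm 𝕜 φ a b)).const_mul (1 / 2)

lemma tendsto_hyersSeq_of_map_add {d : A → X} (hd : ∀ a b, d (a + b) = d a + d b)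
    (hfd : ∀ a, ‖f a - d a‖ ≤ gavrutaControl 𝕜 φ a a) (a : A) :
    Tendsto (hyersSeq 𝕜 f a) atTop (𝓝 (d a)) := by
  rw [tendsto_iff_norm_sub_tendsto_zero]
  refine squeeze_zero (fun _ ↦ norm_nonneg _) (fun n ↦ ?_)
    (tendsto_two_pow_inv_mul_gavrutaControl (𝕜 := 𝕜) φ a a)
  rw [← hyersSeq_of_map_add (𝕜 := 𝕜) hd a n, ← hyersSeq_sub (𝕜 := 𝕜), hyersSeq, norm_two_pow_inv_smul]
  gcongr
  exact hfd _

end HyersUlam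

theorem gavruta_stability_of_additive_maps_general
    {A : Type*} [NonUnitalNormedRing A] [NormedSpace ℂ A]
    {X : Type*} [NormedAddCommGroup X] [NormedSpace ℂ X] [CompleteSpace X]
    (f : A → X)
    (φ : A → A → ℝ)
    (hφ_sum : ∀ a b : A,
      Summable fun n : ℕ => ((2 : ℝ) ^ n)⁻¹ * φ ((2 : ℂ) ^ n • a) ((2 : ℂ) ^ n • b))
    (φt : A → A → ℝ)
    (hφt : ∀ a b : A, φt a b =
      (1 / 2) * ∑' n : ℕ, ((2 : ℝ) ^ n)⁻¹ * φ ((2 : ℂ) ^ n • a) ((2 : ℂ) ^ n • b))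
    (hf_add : ∀ a b : A, ‖f (a + b) - f a - f b‖ ≤ φ a b) :
    (∀ a : A, CauchySeq fun n : ℕ => ((2 : ℂ) ^ n)⁻¹ • f ((2 : ℂ) ^ n • a)) ∧
    ∃ d : A → X,
      (∀ a : A, Tendsto (fun n : ℕ => ((2 : ℂ) ^ n)⁻¹ • f ((2 : ℂ) ^ n • a))
        atTop (𝓝 (d a))) ∧
      (∀ a b : A, d (a + b) = d a + d b) ∧
      (∀ a : A, ‖f a - d a‖ ≤ φt a a) ∧
      (∀ d' : A → X, (∀ a b : A, d' (a + b) = d' a + d' b) →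
        (∀ a : A, ‖f a - d' a‖ ≤ φt a a) → d' = d) := by
  obtain rfl : φt = HyersUlam.gavrutaControl ℂ φ := funext fun a ↦ funext (hφt a)
  have hcauchy a := HyersUlam.cauchySeq_hyersSeq hf_add (hφ_sum a a)
  choose d hd using fun a ↦ cauchySeq_tendsto_of_complete (hcauchy a)
  refine ⟨hcauchy, d, hd,
    fun a b ↦ HyersUlam.map_add_of_tendsto_hyersSeq hf_add (hφ_sum a b) hd,
    fun a ↦ HyersUlam.norm_sub_le_gavrutaControl_of_tendsto hf_add (hφ_sum a a) (hd a), ?_⟩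
  intro d' hd'_add hd'_bound
  funext a
  exact tendsto_nhds_unique (HyersUlam.tendsto_hyersSeq_of_map_add hd'_add hd'_bound a) (hd a)

/-- The Gǎvruta-type stability of additive maps used in the paper: if
`‖f(a+b) − f(a) − f(b)‖ ≤ φ(a,b)` and `φ̃(a,b) = (1/2) ∑ 2⁻ⁿ φ(2ⁿa, 2ⁿb) < ∞`, then
for each `a` the sequence `2⁻ⁿ f(2ⁿ a)` is Cauchy and converges to `d(a)`, where `d`
is additive, satisfies `‖f(a) − d(a)‖ ≤ φ̃(a,a)`, and is the unique additive map with
this property. -/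
theorem gavruta_stability_of_additive_maps
    {A : Type*} [NonUnitalNormedRing A] [NormedSpace ℂ A]
    [IsScalarTower ℂ A A] [SMulCommClass ℂ A A]
    {X : Type*} [NormedAddCommGroup X] [NormedSpace ℂ X] [CompleteSpace X]
    (f : A → X) (hf0 : f 0 = 0)
    (φ : A → A → ℝ) (hφ_nonneg : ∀ a b, 0 ≤ φ a b)
    (hφ_sum : ∀ a b : A,
      Summable fun n : ℕ => ((2 : ℝ) ^ n)⁻¹ * φ ((2 : ℂ) ^ n • a) ((2 : ℂ) ^ n • b))
    (φt : A → A → ℝ)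
    (hφt : ∀ a b : A, φt a b =
      (1 / 2) * ∑' n : ℕ, ((2 : ℝ) ^ n)⁻¹ * φ ((2 : ℂ) ^ n • a) ((2 : ℂ) ^ n • b))
    (hf_add : ∀ a b : A, ‖f (a + b) - f a - f b‖ ≤ φ a b) :
    (∀ a : A, CauchySeq fun n : ℕ => ((2 : ℂ) ^ n)⁻¹ • f ((2 : ℂ) ^ n • a)) ∧
    ∃ d : A → X,
      (∀ a : A, Tendsto (fun n : ℕ => ((2 : ℂ) ^ n)⁻¹ • f ((2 : ℂ) ^ n • a))
        atTop (𝓝 (d a))) ∧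
      (∀ a b : A, d (a + b) = d a + d b) ∧
      (∀ a : A, ‖f a - d a‖ ≤ φt a a) ∧
      (∀ d' : A → X, (∀ a b : A, d' (a + b) = d' a + d' b) →
        (∀ a : A, ‖f a - d' a‖ ≤ φt a a) → d' = d) :=
  gavruta_stability_of_additive_maps_general f φ hφ_sum φt hφt hf_add
end

section
/- Let A be a complex normed algebra, g : A → A a map with g(0) = 0, and φ : A × A → [0,∞) a function with φ̃(a,b) := (1/2)·Σ_{n=0}^∞ 2^{-n} φ(2ⁿa, 2ⁿb) < ∞ for all a,b ∈ A. Suppose the limit τ(a) := lim_{n→∞} 2^{-n} g(2ⁿa) exists for every a ∈ A and that ‖g(ab) − g(a)g(b)‖ ≤ φ(a,b) for all a,b ∈ A. Then τ is multiplicative: τ(ab) = τ(a)τ(b) for all a,b ∈ A. -/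
/-!
Write `D(x, y) = g(xy) - g(x) g(y)` and `τₙ(a) = 2⁻ⁿ g(2ⁿ a)`. Since `2²ⁿ ab = (2ⁿa)(2ⁿb)`,
`τ₂ₙ(ab) - τₙ(a) τₙ(b) = 4⁻ⁿ D(2ⁿa, 2ⁿb)`, whose norm is at most `2⁻ⁿ φ(2ⁿa, 2ⁿb)`. These are the
terms of a convergent series, so they tend to `0`; passing to the limit gives `τ(ab) = τ(a) τ(b)`.
-/

open Filter Topology

section Rescale

variable {𝕜 : Type*} [NormedField 𝕜]

theorem norm_sq_inv_smul_le {E : Type*} [SeminormedAddCommGroup E] [NormedSpace 𝕜 E] {t : 𝕜}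
    (ht : 1 ≤ ‖t‖) (x : E) : ‖(t ^ 2)⁻¹ • x‖ ≤ ‖t‖⁻¹ * ‖x‖ := by
  rw [norm_smul, norm_inv, norm_pow]
  gcongr
  exact le_self_pow₀ ht two_ne_zero

variable {A : Type*} [NonUnitalNormedRing A] [NormedSpace 𝕜 A]
  [IsScalarTower 𝕜 A A] [SMulCommClass 𝕜 A A]

theorem sq_inv_smul_sub_inv_smul_mul_inv_smul (g : A → A) (t : 𝕜) (x y : A) :
    (t ^ 2)⁻¹ • g (t ^ 2 • (x * y)) - (t⁻¹ • g (t • x)) * (t⁻¹ • g (t • y)) =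
      (t ^ 2)⁻¹ • (g (t • x * t • y) - g (t • x) * g (t • y)) := by
  rw [smul_sub, smul_mul_smul_comm, smul_mul_smul_comm, sq, mul_inv]

theorem eq_mul_of_tendsto_inv_smul {ι : Type*} {l : Filter ι} [l.NeBot] (g : A → A)
    (t : ι → 𝕜) {a b x y z : A}
    (ha : Tendsto (fun i => (t i)⁻¹ • g (t i • a)) l (𝓝 x))
    (hb : Tendsto (fun i => (t i)⁻¹ • g (t i • b)) l (𝓝 y))
    (hab : Tendsto (fun i => (t i ^ 2)⁻¹ • g (t i ^ 2 • (a * b))) l (𝓝 z))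
    (hdefect : Tendsto (fun i =>
      (t i ^ 2)⁻¹ • (g (t i • a * t i • b) - g (t i • a) * g (t i • b))) l (𝓝 0)) :
    z = x * y := by
  simp_rw [← sq_inv_smul_sub_inv_smul_mul_inv_smul] at hdefect
  exact sub_eq_zero.mp (tendsto_nhds_unique (hab.sub (ha.mul hb)) hdefect)

end Rescale

theorem limit_map_is_multiplicative_general
    {A : Type*} [NonUnitalNormedRing A] [NormedSpace ℂ A]
    [IsScalarTower ℂ A A] [SMulCommClass ℂ A A]
    (g : A → A)
    (φ : A → A → ℝ)
    (hφ_sum : ∀ a b : A,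
      Summable fun n : ℕ => ((2 : ℝ) ^ n)⁻¹ * φ ((2 : ℂ) ^ n • a) ((2 : ℂ) ^ n • b))
    (τ : A → A)
    (hτ_lim : ∀ a : A, Tendsto (fun n : ℕ => ((2 : ℂ) ^ n)⁻¹ • g ((2 : ℂ) ^ n • a))
      atTop (𝓝 (τ a)))
    (hg_mul : ∀ a b : A, ‖g (a * b) - g a * g b‖ ≤ φ a b) :
    ∀ a b : A, τ (a * b) = τ a * τ b := by
  intro a b
  have hab : Tendsto (fun n : ℕ => (((2 : ℂ) ^ n) ^ 2)⁻¹ • g (((2 : ℂ) ^ n) ^ 2 • (a * b)))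
      atTop (𝓝 (τ (a * b))) := by
    simpa only [Function.comp_def, id, ← pow_mul'] using
      (hτ_lim (a * b)).comp (tendsto_id.const_mul_atTop' two_pos)
  refine eq_mul_of_tendsto_inv_smul g (fun n : ℕ => (2 : ℂ) ^ n) (hτ_lim a) (hτ_lim b) hab ?_
  refine squeeze_zero_norm (fun n => ?_) (hφ_sum a b).tendsto_atTop_zero
  have h_one_le : 1 ≤ ‖(2 : ℂ) ^ n‖ := by
    rw [norm_pow, Complex.norm_ofNat]
    exact one_le_pow₀ one_le_two
  calc _ ≤ ‖(2 : ℂ) ^ n‖⁻¹ * ‖g ((2 : ℂ) ^ n • a * (2 : ℂ) ^ n • b) -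
          g ((2 : ℂ) ^ n • a) * g ((2 : ℂ) ^ n • b)‖ := norm_sq_inv_smul_le h_one_le _
    _ ≤ ((2 : ℝ) ^ n)⁻¹ * φ ((2 : ℂ) ^ n • a) ((2 : ℂ) ^ n • b) := by
      rw [norm_pow, Complex.norm_ofNat]
      exact mul_le_mul_of_nonneg_left (hg_mul _ _) (by positivity)

/-- If `g : A → A` is approximately multiplicative, `‖g(ab) − g(a)g(b)‖ ≤ φ(a,b)`,
with `φ̃(a,b) = (1/2) ∑ 2⁻ⁿ φ(2ⁿa, 2ⁿb) < ∞`, and the limit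
`τ(a) = lim 2⁻ⁿ g(2ⁿ a)` exists for each `a`, then `τ` is multiplicative. -/
theorem limit_map_is_multiplicative
    {A : Type*} [NonUnitalNormedRing A] [NormedSpace ℂ A]
    [IsScalarTower ℂ A A] [SMulCommClass ℂ A A]
    (g : A → A) (hg0 : g 0 = 0)
    (φ : A → A → ℝ) (hφ_nonneg : ∀ a b, 0 ≤ φ a b)
    (hφ_sum : ∀ a b : A,
      Summable fun n : ℕ => ((2 : ℝ) ^ n)⁻¹ * φ ((2 : ℂ) ^ n • a) ((2 : ℂ) ^ n • b))
    (τ : A → A)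
    (hτ_lim : ∀ a : A, Tendsto (fun n : ℕ => ((2 : ℂ) ^ n)⁻¹ • g ((2 : ℂ) ^ n • a))
      atTop (𝓝 (τ a)))
    (hg_mul : ∀ a b : A, ‖g (a * b) - g a * g b‖ ≤ φ a b) :
    ∀ a b : A, τ (a * b) = τ a * τ b :=
  limit_map_is_multiplicative_general g φ hφ_sum τ hτ_lim hg_mul
end
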